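/- Let d ∈ ℕ, τ ∈ ℝ, σ > 0 and α ∈ (0,1). Then for any n ∈ ℕ, sup over P ∈ P_Mon,d(σ) of the inf over Â ∈ Â_n(τ, α, P_Mon,d(σ)) of E_P μ(X_τ(η) \ Â(D)) is at least 1 − α, where μ and η denote the covariate marginal and regression function of P and D ∼ P^n. -/

import Mathlib

open MeasureTheory ProbabilityTheory Real Set
open scoped ENNReal Classical

noncomputable section

/-- `log_+ x := log (x ∨ e)`. -/
def logp (x : ℝ) : ℝ := Real.log (max x (Real.exp 1))

/-- The σ-algebra generated by the covariate `X = Prod.fst`. -/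
def mX (d : ℕ) : MeasurableSpace ((Fin d → ℝ) × ℝ) :=
  MeasurableSpace.comap Prod.fst inferInstance

/-- `η` is (a version of) the regression function `x ↦ E[Y | X = x]` of `P`. -/
def IsRegFn (d : ℕ) (P : Measure ((Fin d → ℝ) × ℝ)) (η : (Fin d → ℝ) → ℝ) : Prop :=
  Measurable η ∧ (fun p => η p.1) =ᵐ[P] P[fun p => p.2 | mX d]

/-- Conditionally on `X`, `Y - η X` is sub-Gaussian with variance parameter `σ²`. -/
def CondSubG (d : ℕ) (σ : ℝ) (P : Measure ((Fin d → ℝ) × ℝ)) (η : (Fin d → ℝ) → ℝ) : Prop :=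
  ∀ t : ℝ, Integrable (fun p => Real.exp (t * (p.2 - η p.1))) P ∧
    (P[fun p => Real.exp (t * (p.2 - η p.1)) | mX d])
      ≤ᵐ[P] fun _ => Real.exp (σ ^ 2 * t ^ 2 / 2)

/-- The class `P_{Mon,d}(σ)`, as a predicate on the pair `(P, η)`. -/
def PMon (d : ℕ) (σ : ℝ) (P : Measure ((Fin d → ℝ) × ℝ)) (η : (Fin d → ℝ) → ℝ) : Prop :=
  IsProbabilityMeasure P ∧ IsRegFn d P η ∧ Monotone η ∧ CondSubG d σ P η

/-- The margin class `P_{Mar,d}(τ, β, ν)`, as a predicate on the pair `(P, η)`. -/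
def PMar (d : ℕ) (τ β ν : ℝ) (P : Measure ((Fin d → ℝ) × ℝ)) (η : (Fin d → ℝ) → ℝ) : Prop :=
  IsProbabilityMeasure P ∧ IsRegFn d P η ∧
    ∀ ξ : ℝ, ξ ∈ Set.Ioc (0 : ℝ) 1 →
      (P.map Prod.fst) (η ⁻¹' Set.Icc τ (τ + ν * ξ ^ β)) ≤ ENNReal.ofReal ξ

/-- Support of a Borel measure: the points all of whose open neighbourhoods have
positive measure. -/
def measSupport {α : Type*} [TopologicalSpace α] [MeasurableSpace α] (μ : Measure α) : Set α :=
  {x | ∀ U : Set α, IsOpen U → x ∈ U → 0 < μ U}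

/-- The regularity class `P_{Reg,d}(τ, θ, γ, λ)`, as a predicate on the pair `(P, η)`. -/
def PReg (d : ℕ) (τ θ γ lam : ℝ) (P : Measure ((Fin d → ℝ) × ℝ)) (η : (Fin d → ℝ) → ℝ) : Prop :=
  IsProbabilityMeasure P ∧ IsRegFn d P η ∧
    ∀ x ∈ {x | τ ≤ η x} ∩ measSupport (P.map Prod.fst), ∀ r : ℝ, r ∈ Set.Ioc (0:ℝ) 1 →
      (ENNReal.ofReal (θ⁻¹ * r ^ d) ≤ (P.map Prod.fst) (Metric.closedBall x r) ∧
        (P.map Prod.fst) (Metric.closedBall x r) ≤ ENNReal.ofReal (θ * (2 * r) ^ d)) ∧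
      (Metric.closedBall x r ∩ {z | τ + lam * r ^ γ ≤ η z}).Nonempty

/-- Indices `i` with `X i ≼ x`, ordered by increasing sup-norm distance to `x`,
ties broken by the original index ordering. -/
def nnOrder {d n : ℕ} (X : Fin n → (Fin d → ℝ)) (x : Fin d → ℝ) : List (Fin n) :=
  List.insertionSort
    (fun i j => ‖X i - x‖ < ‖X j - x‖ ∨ (‖X i - x‖ = ‖X j - x‖ ∧ i ≤ j))
    ((List.finRange n).filter (fun i => decide (X i ≤ x)))

/-- The martingale sums `S_k = ∑_{j=1}^k (Y_{(j)}(x) - τ)/σ`. -/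
def Smart {d n : ℕ} (σ τ : ℝ) (D : Fin n → (Fin d → ℝ) × ℝ) (x : Fin d → ℝ) (k : ℕ) : ℝ :=
  ((((nnOrder (fun i => (D i).1) x).take k).map (fun i => ((D i).2 - τ) / σ)).sum)

/-- The anytime-valid martingale p-value `p̂_{σ,τ}(x, D)`. -/
def phat {d n : ℕ} (σ τ : ℝ) (D : Fin n → (Fin d → ℝ) × ℝ) (x : Fin d → ℝ) : ℝ :=
  ((List.range (nnOrder (fun i => (D i).1) x).length).map (fun k =>
      5.2 * Real.exp (-(max (Smart σ τ D x (k + 1)) 0) ^ 2 / (2.0808 * (k + 1))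
        + Real.log (Real.log (2 * (k + 1))) / 0.72))).foldr min 1

/-- One iteration of the DAG testing procedure `R^ISS`. Edges point from parents to children:
`E a b` means `a` is a parent of `b`; `F` is the weight-one (polyforest) subrelation. -/
def RISSstep {I : Type*} [Fintype I] (E F : I → I → Prop) (α : ℝ) (p : I → ℝ)
    (R : Finset I) : Finset I :=
  let SL : Finset I := Finset.univ.filter (fun i => (∀ j, ¬ F i j) ∧ i ∉ R)
  let SC : Finset I := Finset.univ.filter (fun i => i ∉ R ∧ ∀ j, F j i → j ∈ R)
  let budget : I → ℝ := fun i =>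
    if i ∈ SC then
      ((SL.filter (fun j => j = i ∨ Relation.TransGen F i j)).card : ℝ) * α / (SL.card : ℝ)
    else 0
  let Il : Finset I := Finset.univ.filter (fun i => p i ≤ budget i)
  if Il = ∅ then R
  else R ∪ Il ∪ Finset.univ.filter (fun i => ∃ j ∈ Il, Relation.TransGen E i j)

/-- The DAG testing procedure `R^ISS_α` applied to a polyforest-weighted DAG `(I, E, w)`
(represented by the edge relation `E` and the weight-one subrelation `F`) and p-values `p`. -/
def RISS {I : Type*} [Fintype I] (E F : I → I → Prop) (α : ℝ) (p : I → ℝ) : Finset I :=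
  (RISSstep E F α p)^[Fintype.card I] ∅

/-- Edge relation of the DAG induced by the covariate points `z`. -/
def indE {d m : ℕ} (z : Fin m → (Fin d → ℝ)) (i0 i1 : Fin m) : Prop :=
  i0 ≠ i1 ∧ z i1 ≤ z i0 ∧ ∀ i2, z i1 ≤ z i2 → z i2 ≤ z i0 →
    (z i2 = z i0 ∧ i0 ≤ i2) ∨ (z i2 = z i1 ∧ i2 ≤ i1)

/-- Edge relation of the induced polyforest: among the induced-DAG parents of `i1`, keep the one
of minimal sup-norm distance to `z i1`, ties broken by smallest index. -/
def indF {d m : ℕ} (z : Fin m → (Fin d → ℝ)) (i0 i1 : Fin m) : Prop :=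
  indE z i0 i1 ∧ ∀ i, indE z i i1 →
    (‖z i0 - z i1‖ < ‖z i - z i1‖ ∨ (‖z i0 - z i1‖ = ‖z i - z i1‖ ∧ i0 ≤ i))

/-- The selection set `Â^{ISS}_{σ,τ,α,m}(D)`: the upper hull of the covariate points (among the
first `m` data points) whose hypotheses are rejected by `R^ISS` applied to the induced
polyforest-weighted DAG of `(X_1, …, X_m)` and the martingale p-values `p̂_{σ,τ}(X_i, D)`. -/
def AISS {d n : ℕ} (σ τ α : ℝ) (m : ℕ) (hm : m ≤ n)
    (D : Fin n → (Fin d → ℝ) × ℝ) : Set (Fin d → ℝ) :=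
  let z : Fin m → (Fin d → ℝ) := fun i => (D (Fin.castLE hm i)).1
  {x | ∃ i ∈ RISS (indE z) (indF z) α (fun i => phat σ τ D (z i)), z i ≤ x}

/-- `A` is a valid data-dependent selection set at level `α` for the class `PC`:
it is jointly measurable and satisfies the Type I error guarantee over `PC`. -/
def SelValid (d n : ℕ) (τ α : ℝ)
    (PC : Measure ((Fin d → ℝ) × ℝ) → ((Fin d → ℝ) → ℝ) → Prop)
    (A : (Fin n → (Fin d → ℝ) × ℝ) → Set (Fin d → ℝ)) : Prop :=
  MeasurableSet {q : (Fin n → (Fin d → ℝ) × ℝ) × (Fin d → ℝ) | q.2 ∈ A q.1} ∧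
  ∀ P η, PC P η →
    ENNReal.ofReal (1 - α) ≤ (Measure.pi fun _ : Fin n => P) {ω | A ω ⊆ {x | τ ≤ η x}}

end

/-!
Take the covariate to be constantly `0` and the response to be `τ` with probability `1 - ε` and
`τ - σ` with probability `ε`. This distribution lies in `P_{Mon,d}(σ)` with constant regression
function `τ - εσ`, and for `ε > 0` its `τ`-superlevel set is empty. All `n` observations equal
`(0, τ)` with probability `(1 - ε)ⁿ`, which exceeds `α` for small `ε`; so a valid selection set
must be empty on that dataset. At `ε = 0` the dataset is almost sure while the superlevel set is
everything, so the regret there is `1`.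
-/

open Filter Topology

section TrivialConditioning

variable {Ω : Type*} {m m₀ : MeasurableSpace Ω} {μ : Measure Ω} [IsProbabilityMeasure μ]

theorem condExp_ae_eq_integral_of_measure_eq_zero_or_compl (hm : m ≤ m₀)
    (htriv : ∀ s, MeasurableSet[m] s → μ s = 0 ∨ μ sᶜ = 0) {f : Ω → ℝ} (hf : Integrable f μ) :
    μ[f | m] =ᵐ[μ] fun _ => ∫ x, f x ∂μ := by
  refine (ae_eq_condExp_of_forall_setIntegral_eq hm hf (fun s _ _ => integrableOn_const)
    (fun s hs _ => ?_) aestronglyMeasurable_const).symm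
  rcases htriv s hs with h | h
  · simp [Measure.restrict_eq_zero.mpr h]
  · simp [Measure.restrict_eq_self_of_ae_mem (ae_iff.mpr h)]

end TrivialConditioning

section ConstantCovariate

variable {d : ℕ} {Q : Measure ((Fin d → ℝ) × ℝ)}

theorem measure_eq_zero_or_compl_of_map_fst_eq_dirac {x₀ : Fin d → ℝ}
    (hQ : Q.map Prod.fst = Measure.dirac x₀) (s : Set ((Fin d → ℝ) × ℝ))
    (hs : MeasurableSet[mX d] s) : Q s = 0 ∨ Q sᶜ = 0 := by
  obtain ⟨B, hB, rfl⟩ := hs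
  rw [← Set.preimage_compl, ← Measure.map_apply measurable_fst hB,
    ← Measure.map_apply measurable_fst hB.compl, hQ]
  by_cases h : x₀ ∈ B <;> simp [h]

/-- Conditioning on a constant covariate is trivial, so the sub-Gaussian condition reduces to
Hoeffding's lemma for the bounded response. -/
theorem pMon_const_of_map_fst_eq_dirac [IsProbabilityMeasure Q] {σ a b : ℝ} {x₀ : Fin d → ℝ}
    (hQ : Q.map Prod.fst = Measure.dirac x₀) (hY : ∀ᵐ p ∂Q, p.2 ∈ Set.Icc a b)
    (hab : a ≤ b) (hσ : b - a ≤ 2 * σ) :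
    PMon d σ Q (fun _ => ∫ p, p.2 ∂Q) := by
  have hm : mX d ≤ (inferInstance : MeasurableSpace ((Fin d → ℝ) × ℝ)) :=
    measurable_fst.comap_le
  have htriv := measure_eq_zero_or_compl_of_map_fst_eq_dirac hQ
  have hY_int : Integrable (fun p : (Fin d → ℝ) × ℝ => p.2) Q :=
    Integrable.of_mem_Icc a b measurable_snd.aemeasurable hY
  have hsub := hasSubgaussianMGF_of_mem_Icc measurable_snd.aemeasurable hY
  refine ⟨‹_›, ⟨measurable_const,
    (condExp_ae_eq_integral_of_measure_eq_zero_or_compl hm htriv hY_int).symm⟩,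
    monotone_const, fun t => ⟨hsub.integrable_exp_mul t, ?_⟩⟩
  filter_upwards [condExp_ae_eq_integral_of_measure_eq_zero_or_compl hm htriv
    (hsub.integrable_exp_mul t)] with p hp
  rw [hp]
  refine (hsub.mgf_le t).trans ?_
  gcongr
  have hba : 0 ≤ b - a := sub_nonneg.2 hab
  push_cast [Real.norm_of_nonneg hba]
  exact pow_le_pow_left₀ (by positivity) (by linarith) 2

end ConstantCovariate

noncomputable def twoPoint (d : ℕ) (τ σ ε : ℝ) : Measure ((Fin d → ℝ) × ℝ) :=
  ENNReal.ofReal (1 - ε) • Measure.dirac (0, τ) + ENNReal.ofReal ε • Measure.dirac (0, τ - σ)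

section TwoPoint

variable {d : ℕ} {τ σ ε : ℝ}

instance : IsFiniteMeasure (twoPoint d τ σ ε) :=
  ⟨by simp [twoPoint, ENNReal.add_lt_top]⟩

theorem isProbabilityMeasure_twoPoint (hε0 : 0 ≤ ε) (hε1 : ε ≤ 1) :
    IsProbabilityMeasure (twoPoint d τ σ ε) := by
  constructor
  simp [twoPoint, ← ENNReal.ofReal_add (sub_nonneg.2 hε1) hε0]

theorem map_fst_twoPoint (hε0 : 0 ≤ ε) (hε1 : ε ≤ 1) :
    (twoPoint d τ σ ε).map Prod.fst = Measure.dirac 0 := by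
  rw [twoPoint, Measure.map_add _ _ measurable_fst, Measure.map_smul, Measure.map_smul,
    Measure.map_dirac' measurable_fst, Measure.map_dirac' measurable_fst, ← add_smul,
    ← ENNReal.ofReal_add (sub_nonneg.2 hε1) hε0]
  simp

theorem integral_snd_twoPoint (hε0 : 0 ≤ ε) (hε1 : ε ≤ 1) :
    ∫ p, p.2 ∂(twoPoint d τ σ ε) = τ - ε * σ := by
  rw [twoPoint, integral_add_measure, integral_smul_measure, integral_smul_measure,
    integral_dirac, integral_dirac, ENNReal.toReal_ofReal (sub_nonneg.2 hε1),
    ENNReal.toReal_ofReal hε0]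
  · simp only [smul_eq_mul]; ring
  all_goals exact (integrable_dirac (by simp)).smul_measure ENNReal.ofReal_ne_top

theorem ae_snd_mem_Icc_twoPoint (hσ : 0 ≤ σ) :
    ∀ᵐ p ∂(twoPoint d τ σ ε), p.2 ∈ Set.Icc (τ - σ) τ := by
  have hIcc : MeasurableSet {p : (Fin d → ℝ) × ℝ | p.2 ∈ Set.Icc (τ - σ) τ} :=
    measurable_snd measurableSet_Icc
  rw [twoPoint, ae_add_measure_iff]
  exact ⟨Measure.ae_smul_measure ((ae_dirac_iff hIcc).2 (by simp [hσ])) _,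
    Measure.ae_smul_measure ((ae_dirac_iff hIcc).2 (by simp [hσ])) _⟩

theorem pMon_twoPoint (hσ : 0 ≤ σ) (hε0 : 0 ≤ ε) (hε1 : ε ≤ 1) :
    PMon d σ (twoPoint d τ σ ε) (fun _ => τ - ε * σ) := by
  have := isProbabilityMeasure_twoPoint (d := d) (τ := τ) (σ := σ) hε0 hε1
  simpa only [integral_snd_twoPoint hε0 hε1] using
    pMon_const_of_map_fst_eq_dirac (map_fst_twoPoint hε0 hε1) (ae_snd_mem_Icc_twoPoint hσ)
      (by linarith) (by linarith)

theorem ofReal_one_sub_pow_le_pi_twoPoint_singleton (hε1 : ε ≤ 1) (n : ℕ) :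
    ENNReal.ofReal ((1 - ε) ^ n) ≤
      Measure.pi (fun _ : Fin n => twoPoint d τ σ ε) {fun _ => (0, τ)} := by
  rw [← Set.univ_pi_singleton, Measure.pi_pi, Finset.prod_const, Finset.card_univ,
    Fintype.card_fin, ENNReal.ofReal_pow (sub_nonneg.2 hε1)]
  gcongr
  simp [twoPoint]

end TwoPoint

theorem exists_pos_le_one_lt_one_sub_pow {α : ℝ} (hα : α < 1) (n : ℕ) :
    ∃ ε : ℝ, 0 < ε ∧ ε ≤ 1 ∧ α < (1 - ε) ^ n := by
  have hlim : Tendsto (fun ε : ℝ => (1 - ε) ^ n) (𝓝[>] 0) (𝓝 1) := by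
    have h := ((continuous_const.sub continuous_id).pow n).tendsto' (0 : ℝ) ((1 - 0) ^ n)
      (by simp) (f := fun ε : ℝ => (1 - ε) ^ n)
    simpa using h.mono_left nhdsWithin_le_nhds
  obtain ⟨ε, hαε, hε⟩ :=
    ((hlim.eventually (lt_mem_nhds hα)).and (Ioo_mem_nhdsGT one_pos)).exists
  exact ⟨ε, hε.1, hε.2.le, hαε⟩

theorem zero_notMem_of_selValid {d n : ℕ} {τ σ α : ℝ} (hσ : 0 < σ) (hα : α < 1)
    {A : (Fin n → (Fin d → ℝ) × ℝ) → Set (Fin d → ℝ)} (hA : SelValid d n τ α (PMon d σ) A) :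
    (0 : Fin d → ℝ) ∉ A (fun _ => (0, τ)) := by
  intro h0
  obtain ⟨ε, hε0, hε1, hαε⟩ := exists_pos_le_one_lt_one_sub_pow hα n
  have := isProbabilityMeasure_twoPoint (d := d) (τ := τ) (σ := σ) hε0.le hε1
  have hempty : {x : Fin d → ℝ | τ ≤ τ - ε * σ} = ∅ := by
    ext x
    simpa using mul_pos hε0 hσ
  have hvalid := hA.2 _ _ (pMon_twoPoint (d := d) (τ := τ) hσ.le hε0.le hε1)
  simp only [hempty, Set.subset_empty_iff] at hvalid
  have hdisj : Disjoint {ω | A ω = ∅} {fun _ => ((0 : Fin d → ℝ), τ)} := by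
    refine Set.disjoint_singleton_right.2 fun h => ?_
    exact Set.notMem_empty _ ((show A _ = ∅ from h) ▸ h0)
  have hsum : ENNReal.ofReal ((1 - α) + (1 - ε) ^ n) ≤ 1 := by
    rw [ENNReal.ofReal_add (by linarith) (by positivity)]
    calc _ ≤ _ := add_le_add hvalid (ofReal_one_sub_pow_le_pi_twoPoint_singleton hε1 n)
      _ = _ := (measure_union hdisj (measurableSet_singleton _)).symm
      _ ≤ 1 := prob_le_one
  linarith [ENNReal.ofReal_le_one.1 hsum]

theorem statement8_general (d : ℕ) (τ σ : ℝ) (hσ : 0 < σ)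
    (α : ℝ) (hα : α ∈ Set.Ioo (0 : ℝ) 1) (n : ℕ) :
    ENNReal.ofReal (1 - α) ≤
      ⨆ (P : Measure ((Fin d → ℝ) × ℝ)) (η : (Fin d → ℝ) → ℝ) (_ : PMon d σ P η),
        ⨅ (A : (Fin n → (Fin d → ℝ) × ℝ) → Set (Fin d → ℝ))
            (_ : SelValid d n τ α (PMon d σ) A),
          ∫⁻ ω, (P.map Prod.fst) ({x | τ ≤ η x} \ A ω)
            ∂(Measure.pi fun _ : Fin n => P) := by
  refine le_iSup₂_of_le (twoPoint d τ σ 0) _ <| le_iSup_of_le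
    (pMon_twoPoint hσ.le le_rfl zero_le_one) <| le_iInf₂ fun A hA => ?_
  set ω₀ : Fin n → (Fin d → ℝ) × ℝ := fun _ => (0, τ)
  have hregret : (twoPoint d τ σ 0).map Prod.fst ({x | τ ≤ τ - 0 * σ} \ A ω₀) = 1 := by
    rw [map_fst_twoPoint le_rfl zero_le_one, Measure.dirac_apply_of_mem]
    simpa using zero_notMem_of_selValid hσ hα.2 hA
  calc ENNReal.ofReal (1 - α) ≤ ENNReal.ofReal ((1 - 0) ^ n) := by
        simpa using hα.1.le
    _ ≤ Measure.pi (fun _ => twoPoint d τ σ 0) {ω₀} :=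
        ofReal_one_sub_pow_le_pi_twoPoint_singleton zero_le_one n
    _ = ∫⁻ ω in {ω₀}, (twoPoint d τ σ 0).map Prod.fst ({x | τ ≤ τ - 0 * σ} \ A ω)
          ∂Measure.pi fun _ => twoPoint d τ σ 0 := by
        rw [lintegral_singleton, hregret, one_mul]
    _ ≤ _ := setLIntegral_le_lintegral _ _

/-- Proposition A.2: over the class `P_{Mon,d}(σ)` alone, no data-dependent selection set with
Type I error control can have worst-case expected regret smaller than `1 - α`. -/
theorem statement8 (d : ℕ) (hd : 0 < d) (τ σ : ℝ) (hσ : 0 < σ)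
    (α : ℝ) (hα : α ∈ Set.Ioo (0 : ℝ) 1) (n : ℕ) (hn : 0 < n) :
    ENNReal.ofReal (1 - α) ≤
      ⨆ (P : Measure ((Fin d → ℝ) × ℝ)) (η : (Fin d → ℝ) → ℝ) (_ : PMon d σ P η),
        ⨅ (A : (Fin n → (Fin d → ℝ) × ℝ) → Set (Fin d → ℝ))
            (_ : SelValid d n τ α (PMon d σ) A),
          ∫⁻ ω, (P.map Prod.fst) ({x | τ ≤ η x} \ A ω)
            ∂(Measure.pi fun _ : Fin n => P) :=
  statement8_general d τ σ hσ α hα n
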